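/- arXiv:2109.13417 — 4 statements merged into one kernel-verified Lean document; each statement's English description precedes it below -/
import Mathlib

section
/- Let q, p ∈ [0,1] and c ≥ 0. If kl(q‖p) ≤ c, then p ≤ (√(q + c/2) + √(c/2))². (In particular, a bound of the form kl(C_D(P)‖C_𝒟(P)) ≤ 2R implies the quadratic PAC-Bayes bound C_𝒟(P) ≤ (√(C_D(P)+R)+√R)².) -/
open scoped ENNReal

/-- Bernoulli Kullback–Leibler divergence `kl(q‖p)`, valued in `ℝ≥0∞`, with the
conventions `0·log 0 = 0` and `kl(q‖p) = ⊤` if (`q > 0` and `p = 0`) or (`q < 1` and `p = 1`). -/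
noncomputable def bklDiv (q p : ℝ) : ℝ≥0∞ :=
  if (0 < q ∧ p = 0) ∨ (q < 1 ∧ p = 1) then ⊤
  else ENNReal.ofReal (q * Real.log (q / p) + (1 - q) * Real.log ((1 - q) / (1 - p)))

/-!
Writing `kl(q‖p) = p · klFun (q / p) + (1 - p) · klFun ((1 - q) / (1 - p))` with
`klFun x = x log x + 1 - x ≥ 0`, and using `klFun x ≥ (1 - x)² / 2` on `[0, 1]` (the difference
is antitone there because `log x ≤ x - 1`), gives the refined Pinsker inequality
`kl(q‖p) ≥ (p - q)² / (2p)` for `q ≤ p`. Hence `(p - q)² ≤ 2pc`, a quadratic inequality in `√p`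
whose larger root is `√(q + c/2) + √(c/2)`.
-/

open Real InformationTheory Set

lemma sq_one_sub_div_two_le_klFun {x : ℝ} (hx : x ∈ Icc (0 : ℝ) 1) :
    (1 - x) ^ 2 / 2 ≤ klFun x := by
  have hanti : AntitoneOn (fun y ↦ klFun y - (1 - y) ^ 2 / 2) (Icc 0 1) := by
    refine antitoneOn_of_hasDerivWithinAt_nonpos (convex_Icc 0 1) (by fun_prop)
      (f' := fun y ↦ log y + (1 - y)) (fun y hy ↦ ?_) (fun y hy ↦ ?_)
    · rw [interior_Icc] at hy
      have hsq : HasDerivAt (fun y : ℝ ↦ (1 - y) ^ 2 / 2) (-(1 - y)) y :=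
        (((hasDerivAt_id' y).const_sub 1).pow 2).div_const 2 |>.congr_deriv (by ring)
      exact ((hasDerivAt_klFun hy.1.ne').sub hsq).hasDerivWithinAt.congr_deriv (by ring)
    · rw [interior_Icc] at hy
      linarith [log_le_sub_one_of_pos hy.1]
  simpa [klFun_one] using hanti hx ⟨zero_le_one, le_rfl⟩ hx.2

lemma bernoulli_kl_eq_klFun {q p : ℝ} (hp0 : 0 < p) (hp1 : p < 1) :
    q * log (q / p) + (1 - q) * log ((1 - q) / (1 - p)) =
      p * klFun (q / p) + (1 - p) * klFun ((1 - q) / (1 - p)) := by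
  have : 1 - p ≠ 0 := by linarith
  simp only [klFun_apply]
  field_simp
  ring

lemma ofReal_sq_sub_div_le_bklDiv {q p : ℝ} (hq : 0 ≤ q) (hqp : q ≤ p) (hp : p ≤ 1) :
    ENNReal.ofReal ((p - q) ^ 2 / (2 * p)) ≤ bklDiv q p := by
  rcases hp.lt_or_eq with hp1 | rfl
  · rcases (hq.trans hqp).eq_or_lt with rfl | hp0
    · simp
    rw [bklDiv, if_neg (by grind), bernoulli_kl_eq_klFun hp0 hp1]
    refine ENNReal.ofReal_le_ofReal ?_
    have hratio : q / p ∈ Icc (0 : ℝ) 1 := ⟨by positivity, div_le_one_of_le₀ hqp hp0.le⟩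
    have hrest : 0 ≤ (1 - p) * klFun ((1 - q) / (1 - p)) :=
      mul_nonneg (by linarith) (klFun_nonneg (div_nonneg (by linarith) (by linarith)))
    calc (p - q) ^ 2 / (2 * p) = p * ((1 - q / p) ^ 2 / 2) := by field_simp
      _ ≤ p * klFun (q / p) := by gcongr; exact sq_one_sub_div_two_le_klFun hratio
      _ ≤ _ := by linarith
  · rcases hqp.lt_or_eq with hq1 | rfl
    · simp [bklDiv, hq1]
    · simp

lemma le_sq_sqrt_add_sqrt_of_sq_sub_le {q p c : ℝ} (hq : 0 ≤ q) (hc : 0 ≤ c)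
    (h : (p - q) ^ 2 ≤ 2 * p * c) : p ≤ (√(q + c / 2) + √(c / 2)) ^ 2 := by
  have ha : √(q + c / 2) ^ 2 = q + c / 2 := sq_sqrt (by positivity)
  have hb : √(c / 2) ^ 2 = c / 2 := sq_sqrt (by positivity)
  have : p - q - c ≤ 2 * √(q + c / 2) * √(c / 2) :=
    le_of_sq_le_sq (by nlinarith) (by positivity)
  nlinarith

/-- Inverting the Bernoulli KL divergence: if `kl(q‖p) ≤ c` then
`p ≤ (√(q + c/2) + √(c/2))²`. -/
theorem kl_inv_quadratic_bound (q p c : ℝ)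
    (hq : q ∈ Set.Icc (0 : ℝ) 1) (hp : p ∈ Set.Icc (0 : ℝ) 1) (hc : 0 ≤ c)
    (hkl : bklDiv q p ≤ ENNReal.ofReal c) :
    p ≤ (Real.sqrt (q + c / 2) + Real.sqrt (c / 2)) ^ 2 := by
  rcases le_or_gt p q with hpq | hqp
  · calc p ≤ q := hpq
      _ ≤ √(q + c / 2) ^ 2 := by rw [sq_sqrt (by linarith [hq.1])]; linarith
      _ ≤ _ := by gcongr; exact le_add_of_nonneg_right (sqrt_nonneg _)
  have hp0 : 0 < p := hq.1.trans_lt hqp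
  have hpinsker : (p - q) ^ 2 / (2 * p) ≤ c := by
    rw [← ENNReal.ofReal_le_ofReal_iff hc]
    exact (ofReal_sq_sub_div_le_bklDiv hq.1 hqp.le hp.2).trans hkl
  refine le_sq_sqrt_add_sqrt_of_sq_sub_le hq.1 hc ?_
  rw [div_le_iff₀ (by positivity)] at hpinsker
  linarith
end

section
/- For all real numbers q, p with 0 ≤ q ≤ p < 1 and p > 0, the Bernoulli Kullback–Leibler divergence satisfies the refined Pinsker lower bound kl(q‖p) ≥ (p − q)²/(2p). -/
/-!
Split the divergence into its two terms. With `t = q/p ≤ 1`, the bound `log t ≥ sinh (log t)`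
gives `q log (q/p) ≥ (q²/p - p)/2`, and `log x ≥ 1 - 1/x` gives
`(1-q) log ((1-q)/(1-p)) ≥ p - q`. These two lower bounds add up to exactly `(p - q)²/(2p)`.
-/

open Real

lemma sq_sub_one_div_two_le_mul_log {t : ℝ} (ht0 : 0 ≤ t) (ht1 : t ≤ 1) :
    (t ^ 2 - 1) / 2 ≤ t * log t := by
  rcases ht0.eq_or_lt with rfl | ht0
  · norm_num
  have hsinh : (t - t⁻¹) / 2 ≤ log t := by
    rw [← sinh_log ht0]
    exact sinh_le_self_iff.mpr (log_nonpos ht0.le ht1)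
  calc (t ^ 2 - 1) / 2 = t * ((t - t⁻¹) / 2) := by field_simp
    _ ≤ t * log t := by gcongr

lemma mul_log_div_eq_mul_mul_log {a b : ℝ} (hb : b ≠ 0) :
    a * log (a / b) = b * (a / b * log (a / b)) := by
  field_simp

/-- Refined Pinsker inequality for the Bernoulli KL divergence: for `0 ≤ q ≤ p < 1`
with `p > 0`, one has `kl(q‖p) ≥ (p − q)²/(2p)`.  (In this regime the divergence is
given by the real formula `q·log(q/p) + (1−q)·log((1−q)/(1−p))`; note that for `q = 0`
the Lean conventions `log 0 = 0` correctly realize the convention `0·log 0 = 0`.) -/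
theorem bernoulli_kl_refined_pinsker (q p : ℝ)
    (hq0 : 0 ≤ q) (hqp : q ≤ p) (hp1 : p < 1) (hp0 : 0 < p) :
    (p - q) ^ 2 / (2 * p) ≤
      q * Real.log (q / p) + (1 - q) * Real.log ((1 - q) / (1 - p)) := by
  have hp1' : 0 < 1 - p := by linarith
  have hq1' : 0 ≤ 1 - q := by linarith
  have hfirst : (q ^ 2 / p - p) / 2 ≤ q * log (q / p) := by
    rw [mul_log_div_eq_mul_mul_log hp0.ne']
    calc (q ^ 2 / p - p) / 2 = p * (((q / p) ^ 2 - 1) / 2) := by field_simp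
      _ ≤ _ := by
        gcongr
        exact sq_sub_one_div_two_le_mul_log (by positivity) ((div_le_one hp0).mpr hqp)
  have hsecond : p - q ≤ (1 - q) * log ((1 - q) / (1 - p)) := by
    rw [mul_log_div_eq_mul_mul_log hp1'.ne']
    calc p - q = (1 - p) * ((1 - q) / (1 - p) - 1) := by field_simp; ring
      _ ≤ _ := by
        gcongr
        exact self_sub_one_le_mul_log (by positivity)
  calc (p - q) ^ 2 / (2 * p) = (q ^ 2 / p - p) / 2 + (p - q) := by field_simp; ring
    _ ≤ _ := add_le_add hfirst hsecond
end

section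
/- (Donsker–Varadhan change of measure, as used in the proof of the PAC-Bayes bound.) Let Ω be a measurable space, let P and Q be probability measures on Ω, and let f : Ω → ℝ be a bounded measurable function. Then ∫ f dP ≤ KL(P‖Q) + log ∫ e^f dQ, where KL(P‖Q) ∈ [0,+∞] is the Kullback–Leibler divergence (the inequality holding trivially when KL(P‖Q) = +∞). -/
/-!
Tilt `Q` by `f`, i.e. pass to the probability measure `Q_f = e^f Q / ∫ e^f dQ`. Then
`log (dP/dQ_f) = log (dP/dQ) - f + log ∫ e^f dQ`, so integrating against `P` gives
`KL(P‖Q_f) = KL(P‖Q) - ∫ f dP + log ∫ e^f dQ`, and Gibbs' inequality `KL(P‖Q_f) ≥ 0` is the claim.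
-/

open MeasureTheory Real
open scoped ENNReal Classical

noncomputable def klDiv' {α : Type*} [MeasurableSpace α] (P Q : Measure α) : ℝ≥0∞ :=
  if P ≪ Q ∧ Integrable (llr P Q) P then ENNReal.ofReal (∫ x, llr P Q x ∂P) else ⊤

open InformationTheory Set

section

variable {α : Type*} [MeasurableSpace α] {μ ν : Measure α}

lemma klDiv'_eq_klDiv [IsFiniteMeasure μ] [IsFiniteMeasure ν] (h_eq : μ univ = ν univ) :
    klDiv' μ ν = klDiv μ ν := by
  have h_real : μ.real univ = ν.real univ := by simp [measureReal_def, h_eq]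
  rw [klDiv', klDiv_def, h_real, add_sub_cancel_right]

lemma integral_llr_nonneg [IsFiniteMeasure μ] [IsFiniteMeasure ν] (hμν : μ ≪ ν)
    (h_eq : μ univ = ν univ) : 0 ≤ ∫ x, llr μ ν x ∂μ :=
  toReal_klDiv_of_measure_eq hμν h_eq ▸ ENNReal.toReal_nonneg

lemma integral_le_toReal_klDiv_add_log_integral_exp [IsProbabilityMeasure μ]
    [IsProbabilityMeasure ν] {f : α → ℝ} (h_kl : klDiv μ ν ≠ ∞) (hfμ : Integrable f μ)
    (hfν : Integrable (fun x ↦ exp (f x)) ν) :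
    ∫ x, f x ∂μ ≤ (klDiv μ ν).toReal + log (∫ x, exp (f x) ∂ν) := by
  obtain ⟨hac, h_int⟩ := klDiv_ne_top_iff.mp h_kl
  have : IsProbabilityMeasure (ν.tilted f) := isProbabilityMeasure_tilted hfν
  have h_gibbs := integral_llr_nonneg (hac.trans (absolutelyContinuous_tilted hfν)) (by simp)
  rw [integral_llr_tilted_right hac hfμ hfν h_int] at h_gibbs
  rw [toReal_klDiv_of_measure_eq hac (by simp)]
  linarith

end

/-- Donsker–Varadhan change of measure: for probability measures `P, Q` and a bounded
measurable `f`, `∫ f dP ≤ KL(P‖Q) + log ∫ e^f dQ` (trivially when `KL(P‖Q) = ⊤`). -/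
theorem donsker_varadhan
    {Ω : Type*} [MeasurableSpace Ω]
    (P Q : Measure Ω) [IsProbabilityMeasure P] [IsProbabilityMeasure Q]
    (f : Ω → ℝ) (hf : Measurable f) (M : ℝ) (hbdd : ∀ x, |f x| ≤ M)
    (hKL : klDiv' P Q ≠ ⊤) :
    ∫ x, f x ∂P ≤ (klDiv' P Q).toReal + Real.log (∫ x, Real.exp (f x) ∂Q) := by
  rw [klDiv'_eq_klDiv (by simp)] at hKL ⊢
  have hexp_le : ∀ x, ‖exp (f x)‖ ≤ exp M := fun x ↦ by
    rw [norm_of_nonneg (exp_pos _).le]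
    exact exp_le_exp.mpr (abs_le.mp (hbdd x)).2
  exact integral_le_toReal_klDiv_add_log_integral_exp hKL
    (.of_bound hf.aestronglyMeasurable M (.of_forall hbdd))
    (.of_bound hf.exp.aestronglyMeasurable (exp M) (.of_forall hexp_le))
end

section
/- (Evolution-strategies gradient estimator with respect to the standard deviations.) Let C : ℝ^d → ℝ be a bounded measurable function and let μ ∈ ℝ^d. Define G on the open positive orthant {σ ∈ ℝ^d : σ_i > 0 for all i} by G(σ) = ∫_{ℝ^d} C(μ + σ ⊙ ε) dγ(ε). Then G is differentiable at every such σ, and for each coordinate i, ∂G/∂σ_i (σ) = (1/σ_i) ∫_{ℝ^d} C(μ + σ ⊙ ε)(ε_i² − 1) dγ(ε). -/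
/-!
Put `s = σ ⊙ r`: it suffices to differentiate `K(r) = ∫ f(r ⊙ ε) dγ(ε)` at `r = 1`, where
`f = C(μ + σ ⊙ ·)`, and the chain rule then contributes the factor `1/σᵢ`.
For `r` in the positive orthant, the law of `r ⊙ ε` has density `∏ᵢ q(rᵢ, εᵢ)` with respect to
`γ`, where `q(r, x) = r⁻¹ exp((1 - r⁻²) x² / 2)` is the density of `N(0, r²)` with respect to
`N(0, 1)`. This moves the dependence on `r` from the merely measurable `C` into a smooth density,
with `∂q/∂r (1, x) = x² - 1`. Differentiation under the integral sign is justified for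
`rᵢ ∈ [1/2, 3/2]`, where `q` and `∂q/∂r` are dominated by `24 (1 + x²) q(3/2, x)`; this majorant
is `N(0,1)`-integrable because `q(3/2, ·) N(0,1) = N(0, 9/4)`.
-/

open MeasureTheory ProbabilityTheory

/-- The standard Gaussian measure on `ℝ^d` (the `d`-fold product of `N(0,1)`). -/
noncomputable def stdGaussianPi (d : ℕ) : Measure (Fin d → ℝ) :=
  Measure.pi fun _ => gaussianReal 0 1

open Real Filter Topology
open scoped ENNReal NNReal

namespace MeasureTheory

variable {ι : Type*} [Fintype ι] {X : ι → Type*} [∀ i, MeasurableSpace (X i)]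
  {μ : (i : ι) → Measure (X i)} [∀ i, IsProbabilityMeasure (μ i)]

theorem lintegral_fintype_prod_eq_prod {g : (i : ι) → X i → ℝ≥0∞} (hg : ∀ i, Measurable (g i)) :
    ∫⁻ x, ∏ i, g i (x i) ∂Measure.pi μ = ∏ i, ∫⁻ y, g i y ∂μ i := by
  rw [lintegral_prod_eq_prod_lintegral_of_indepFun _ _ (iIndepFun_pi fun i => (hg i).aemeasurable)
    fun i => (hg i).comp (measurable_pi_apply i)]
  exact Finset.prod_congr rfl fun i _ => (measurePreserving_eval μ i).lintegral_comp (hg i)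

theorem Measure.pi_withDensity {g : (i : ι) → X i → ℝ≥0∞} (hg : ∀ i, Measurable (g i))
    [∀ i, SigmaFinite ((μ i).withDensity (g i))] :
    Measure.pi (fun i => (μ i).withDensity (g i))
      = (Measure.pi μ).withDensity (fun x => ∏ i, g i (x i)) := by
  refine Measure.pi_eq fun t ht => ?_
  have hind : (Set.univ.pi t).indicator (fun x => ∏ i, g i (x i))
      = fun x => ∏ i, (t i).indicator (g i) (x i) := by
    ext x
    by_cases hx : x ∈ Set.univ.pi t
    · rw [Set.indicator_of_mem hx]
      exact Finset.prod_congr rfl fun i _ => (Set.indicator_of_mem (hx i (Set.mem_univ i)) _).symm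
    · obtain ⟨j, hj⟩ : ∃ j, x j ∉ t j := by simpa [Set.mem_pi] using hx
      rw [Set.indicator_of_notMem hx, Finset.prod_eq_zero (Finset.mem_univ j)
        (Set.indicator_of_notMem hj _)]
  rw [withDensity_apply _ (.univ_pi ht), ← lintegral_indicator (.univ_pi ht), hind,
    lintegral_fintype_prod_eq_prod fun i => (hg i).indicator (ht i)]
  exact Finset.prod_congr rfl fun i _ => by
    rw [lintegral_indicator (ht i), withDensity_apply _ (ht i)]

end MeasureTheory

noncomputable def gaussianScaleRatio (r x : ℝ) : ℝ :=
  r⁻¹ * exp ((1 - r⁻¹ ^ 2) * x ^ 2 / 2)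

lemma gaussianScaleRatio_nonneg {r : ℝ} (hr : 0 ≤ r) (x : ℝ) : 0 ≤ gaussianScaleRatio r x := by
  unfold gaussianScaleRatio; positivity

@[fun_prop]
lemma continuous_gaussianScaleRatio (r : ℝ) : Continuous (gaussianScaleRatio r) := by
  unfold gaussianScaleRatio; fun_prop

lemma gaussianScaleRatio_one (x : ℝ) : gaussianScaleRatio 1 x = 1 := by
  simp [gaussianScaleRatio]

lemma gaussianPDFReal_mul_gaussianScaleRatio {r : ℝ} (hr : 0 < r) (x : ℝ) :
    gaussianPDFReal 0 1 x * gaussianScaleRatio r x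
      = gaussianPDFReal 0 (NNReal.mk (r ^ 2) (sq_nonneg r)) x := by
  simp only [gaussianPDFReal, gaussianScaleRatio, NNReal.coe_one, NNReal.coe_mk, sub_zero, mul_one]
  rw [Real.sqrt_mul' _ (sq_nonneg r), Real.sqrt_sq hr.le, mul_mul_mul_comm, ← exp_add, mul_inv]
  congr 2
  field_simp
  ring

lemma gaussianReal_withDensity_gaussianScaleRatio {r : ℝ} (hr : 0 < r) :
    (gaussianReal 0 1).withDensity (fun x => ENNReal.ofReal (gaussianScaleRatio r x))
      = gaussianReal 0 (NNReal.mk (r ^ 2) (sq_nonneg r)) := by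
  have hr2 : (NNReal.mk (r ^ 2) (sq_nonneg r) : ℝ≥0) ≠ 0 := by
    simpa [← NNReal.coe_eq_zero] using hr.ne'
  rw [gaussianReal_of_var_ne_zero 0 one_ne_zero, gaussianReal_of_var_ne_zero 0 hr2,
    ← withDensity_mul _ (measurable_gaussianPDF 0 1) (by fun_prop)]
  congr 1
  ext x
  simp only [Pi.mul_apply, gaussianPDF]
  rw [← ENNReal.ofReal_mul (gaussianPDFReal_nonneg _ _ _),
    gaussianPDFReal_mul_gaussianScaleRatio hr]

lemma stdGaussianPi_map_mul {d : ℕ} {r : Fin d → ℝ} (hr : ∀ i, 0 < r i) :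
    (stdGaussianPi d).map (r * ·)
      = (stdGaussianPi d).withDensity
          (fun ε => ∏ i, ENNReal.ofReal (gaussianScaleRatio (r i) (ε i))) := by
  calc (stdGaussianPi d).map (r * ·)
      = Measure.pi fun i => (gaussianReal 0 1).map (r i * ·) :=
        Measure.pi_map_pi fun i => (measurable_id.const_mul (r i)).aemeasurable
    _ = Measure.pi fun i =>
          (gaussianReal 0 1).withDensity fun x => ENNReal.ofReal (gaussianScaleRatio (r i) x) := by
        congr with i
        rw [gaussianReal_map_const_mul, mul_zero, mul_one,
          gaussianReal_withDensity_gaussianScaleRatio (hr i)]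
    _ = _ := Measure.pi_withDensity fun i => by fun_prop

instance isProbabilityMeasure_stdGaussianPi (d : ℕ) : IsProbabilityMeasure (stdGaussianPi d) := by
  unfold stdGaussianPi; infer_instance

lemma integral_comp_mul_stdGaussianPi {d : ℕ} {f : (Fin d → ℝ) → ℝ} (hf : Measurable f)
    {r : Fin d → ℝ} (hr : ∀ i, 0 < r i) :
    ∫ ε, f (r * ε) ∂stdGaussianPi d
      = ∫ ε, f ε * ∏ i, gaussianScaleRatio (r i) (ε i) ∂stdGaussianPi d := by
  rw [← integral_map (by fun_prop) hf.aestronglyMeasurable, stdGaussianPi_map_mul hr,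
    integral_withDensity_eq_integral_toReal_smul (by fun_prop)
      (ae_of_all _ fun _ => ENNReal.prod_lt_top fun _ _ => ENNReal.ofReal_lt_top)]
  refine integral_congr_ae (ae_of_all _ fun ε => ?_)
  dsimp only
  rw [smul_eq_mul, mul_comm, ENNReal.toReal_prod]
  congr 1
  exact Finset.prod_congr rfl fun i _ =>
    ENNReal.toReal_ofReal (gaussianScaleRatio_nonneg (hr i).le _)

noncomputable def gaussianScaleRatioDeriv (r x : ℝ) : ℝ :=
  gaussianScaleRatio r x * ((x ^ 2 - r ^ 2) / r ^ 3)

lemma hasDerivAt_gaussianScaleRatio {r : ℝ} (hr : r ≠ 0) (x : ℝ) :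
    HasDerivAt (gaussianScaleRatio · x) (gaussianScaleRatioDeriv r x) r := by
  have hinv := hasDerivAt_inv hr
  have hexp := (((hinv.fun_pow 2).const_sub 1).mul_const (x ^ 2)).div_const 2 |>.exp
  refine (hinv.mul hexp).congr_deriv ?_
  unfold gaussianScaleRatioDeriv gaussianScaleRatio
  simp only [Nat.cast_ofNat, pow_one, Nat.add_one_sub_one]
  field_simp
  ring

lemma gaussianScaleRatioDeriv_one (x : ℝ) : gaussianScaleRatioDeriv 1 x = x ^ 2 - 1 := by
  simp [gaussianScaleRatioDeriv, gaussianScaleRatio_one]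

@[fun_prop]
lemma continuous_gaussianScaleRatioDeriv (r : ℝ) : Continuous (gaussianScaleRatioDeriv r) := by
  unfold gaussianScaleRatioDeriv; fun_prop

noncomputable def gaussianScaleRatioMajorant (x : ℝ) : ℝ :=
  24 * ((1 + x ^ 2) * gaussianScaleRatio (3 / 2) x)

lemma gaussianScaleRatioMajorant_nonneg (x : ℝ) : 0 ≤ gaussianScaleRatioMajorant x := by
  have := gaussianScaleRatio_nonneg (by norm_num : (0 : ℝ) ≤ 3 / 2) x
  unfold gaussianScaleRatioMajorant; positivity

lemma gaussianScaleRatio_le_three_mul {r : ℝ} (hr : r ∈ Set.Icc (1 / 2 : ℝ) (3 / 2)) (x : ℝ) :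
    gaussianScaleRatio r x ≤ 3 * gaussianScaleRatio (3 / 2) x := by
  obtain ⟨hr₁, hr₂⟩ := hr
  have hinv : r⁻¹ ≤ 2 := by rw [inv_le_comm₀ (by linarith) two_pos]; linarith
  have hinv' : (3 / 2 : ℝ)⁻¹ ≤ r⁻¹ := inv_anti₀ (by linarith) hr₂
  have hexp : exp ((1 - r⁻¹ ^ 2) * x ^ 2 / 2) ≤ exp ((1 - (3 / 2 : ℝ)⁻¹ ^ 2) * x ^ 2 / 2) := by
    gcongr
  unfold gaussianScaleRatio
  calc r⁻¹ * exp ((1 - r⁻¹ ^ 2) * x ^ 2 / 2) ≤ 2 * exp ((1 - (3 / 2 : ℝ)⁻¹ ^ 2) * x ^ 2 / 2) :=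
        mul_le_mul hinv hexp (exp_nonneg _) zero_le_two
    _ = _ := by ring

lemma gaussianScaleRatio_le_majorant {r : ℝ} (hr : r ∈ Set.Icc (1 / 2 : ℝ) (3 / 2)) (x : ℝ) :
    gaussianScaleRatio r x ≤ gaussianScaleRatioMajorant x := by
  have := gaussianScaleRatio_le_three_mul hr x
  have := gaussianScaleRatio_nonneg (by norm_num : (0 : ℝ) ≤ 3 / 2) x
  unfold gaussianScaleRatioMajorant
  nlinarith [sq_nonneg x]

lemma abs_gaussianScaleRatioDeriv_le_majorant {r : ℝ} (hr : r ∈ Set.Icc (1 / 2 : ℝ) (3 / 2))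
    (x : ℝ) :
    |gaussianScaleRatioDeriv r x| ≤ gaussianScaleRatioMajorant x := by
  have hr0 : 0 < r := by linarith [hr.1]
  have hfactor : |(x ^ 2 - r ^ 2) / r ^ 3| ≤ 8 * (1 + x ^ 2) := by
    have h8 : 1 ≤ 8 * r ^ 3 := by nlinarith [pow_le_pow_left₀ (by norm_num) hr.1 3]
    have h8' : r ^ 2 ≤ 8 * r ^ 3 := by nlinarith
    rw [abs_div, abs_of_pos (pow_pos hr0 3), div_le_iff₀ (pow_pos hr0 3), abs_le]
    constructor <;> nlinarith [sq_nonneg x, mul_le_mul_of_nonneg_left h8 (sq_nonneg x)]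
  unfold gaussianScaleRatioDeriv gaussianScaleRatioMajorant
  rw [abs_mul, abs_of_nonneg (gaussianScaleRatio_nonneg hr0.le x)]
  calc gaussianScaleRatio r x * |(x ^ 2 - r ^ 2) / r ^ 3|
      ≤ (3 * gaussianScaleRatio (3 / 2) x) * (8 * (1 + x ^ 2)) :=
        mul_le_mul (gaussianScaleRatio_le_three_mul hr x) hfactor (abs_nonneg _)
          (by have := gaussianScaleRatio_nonneg (by norm_num : (0 : ℝ) ≤ 3 / 2) x; positivity)
    _ = _ := by ring

lemma integrable_one_add_sq_mul_gaussianScaleRatio {r : ℝ} (hr : 0 < r) :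
    Integrable (fun x => (1 + x ^ 2) * gaussianScaleRatio r x) (gaussianReal 0 1) := by
  have h := integrable_withDensity_iff (μ := gaussianReal 0 1)
    (f := fun x => ENNReal.ofReal (gaussianScaleRatio r x)) (by fun_prop)
    (ae_of_all _ fun _ => ENNReal.ofReal_lt_top) (g := fun x => 1 + x ^ 2)
  simp_rw [gaussianReal_withDensity_gaussianScaleRatio hr,
    ENNReal.toReal_ofReal (gaussianScaleRatio_nonneg hr.le _)] at h
  exact h.mp ((integrable_const 1).add (memLp_id_gaussianReal 2).integrable_sq)

lemma integrable_gaussianScaleRatioMajorant :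
    Integrable gaussianScaleRatioMajorant (gaussianReal 0 1) :=
  (integrable_one_add_sq_mul_gaussianScaleRatio (by norm_num : (0 : ℝ) < 3 / 2)).const_mul 24

section ProdGaussianScaleRatio

variable {ι : Type*} [Fintype ι]

lemma norm_sum_smul_proj_le (a : ι → ℝ) :
    ‖∑ i, a i • ContinuousLinearMap.proj (R := ℝ) (φ := fun _ : ι => ℝ) i‖ ≤ ∑ i, |a i| :=
  ContinuousLinearMap.opNorm_le_bound _ (by positivity) fun v => by
    simp only [sum_apply, smul_apply, ContinuousLinearMap.proj_apply, smul_eq_mul, Finset.sum_mul]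
    refine (Finset.abs_sum_le_sum_abs _ _).trans (Finset.sum_le_sum fun i _ => ?_)
    rw [abs_mul]
    exact mul_le_mul_of_nonneg_left (norm_le_pi_norm v i) (abs_nonneg _)

variable [DecidableEq ι]

noncomputable def fderivProdGaussianScaleRatio (r ε : ι → ℝ) : (ι → ℝ) →L[ℝ] ℝ :=
  ∑ i, (∏ j ∈ Finset.univ.erase i, gaussianScaleRatio (r j) (ε j)) •
    gaussianScaleRatioDeriv (r i) (ε i) • ContinuousLinearMap.proj i

lemma hasFDerivAt_prod_gaussianScaleRatio {r : ι → ℝ} (hr : ∀ i, r i ≠ 0) (ε : ι → ℝ) :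
    HasFDerivAt (fun r : ι → ℝ => ∏ i, gaussianScaleRatio (r i) (ε i))
      (fderivProdGaussianScaleRatio r ε) r :=
  HasFDerivAt.finsetProd fun i _ =>
    (hasDerivAt_gaussianScaleRatio (hr i) (ε i)).comp_hasFDerivAt (f := fun r : ι → ℝ => r i) r
      (hasFDerivAt_apply i r)

lemma fderivProdGaussianScaleRatio_one (ε : ι → ℝ) :
    fderivProdGaussianScaleRatio 1 ε = ∑ i, (ε i ^ 2 - 1) • ContinuousLinearMap.proj i := by
  simp [fderivProdGaussianScaleRatio, gaussianScaleRatio_one, gaussianScaleRatioDeriv_one]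

lemma continuous_fderivProdGaussianScaleRatio (r : ι → ℝ) :
    Continuous (fderivProdGaussianScaleRatio r) := by
  unfold fderivProdGaussianScaleRatio; fun_prop

lemma norm_fderivProdGaussianScaleRatio_le {r : ι → ℝ}
    (hr : ∀ i, r i ∈ Set.Icc (1 / 2 : ℝ) (3 / 2)) (ε : ι → ℝ) :
    ‖fderivProdGaussianScaleRatio r ε‖
      ≤ Fintype.card ι * ∏ i, gaussianScaleRatioMajorant (ε i) := by
  have hterm : ∀ i, |(∏ j ∈ Finset.univ.erase i, gaussianScaleRatio (r j) (ε j))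
      * gaussianScaleRatioDeriv (r i) (ε i)| ≤ ∏ j, gaussianScaleRatioMajorant (ε j) := by
    intro i
    have hpos : ∀ j, 0 ≤ gaussianScaleRatio (r j) (ε j) := fun j =>
      gaussianScaleRatio_nonneg (by linarith [(hr j).1]) _
    rw [abs_mul, abs_of_nonneg (Finset.prod_nonneg fun j _ => hpos j),
      ← Finset.prod_erase_mul _ _ (Finset.mem_univ i)]
    exact mul_le_mul
      (Finset.prod_le_prod (fun j _ => hpos j) fun j _ => gaussianScaleRatio_le_majorant (hr j) _)
      (abs_gaussianScaleRatioDeriv_le_majorant (hr i) _) (abs_nonneg _)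
      (Finset.prod_nonneg fun j _ => gaussianScaleRatioMajorant_nonneg _)
  calc ‖fderivProdGaussianScaleRatio r ε‖
      = ‖∑ i, ((∏ j ∈ Finset.univ.erase i, gaussianScaleRatio (r j) (ε j))
          * gaussianScaleRatioDeriv (r i) (ε i)) • ContinuousLinearMap.proj i‖ := by
        simp only [fderivProdGaussianScaleRatio, smul_smul]
    _ ≤ ∑ i, |(∏ j ∈ Finset.univ.erase i, gaussianScaleRatio (r j) (ε j))
          * gaussianScaleRatioDeriv (r i) (ε i)| := norm_sum_smul_proj_le _
    _ ≤ ∑ _i : ι, ∏ j, gaussianScaleRatioMajorant (ε j) := Finset.sum_le_sum fun i _ => hterm i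
    _ = Fintype.card ι * ∏ i, gaussianScaleRatioMajorant (ε i) := by simp

end ProdGaussianScaleRatio

lemma integrable_mul_sq_sub_one_stdGaussianPi {d : ℕ} {f : (Fin d → ℝ) → ℝ} (hf : Measurable f)
    {M : ℝ} (hfM : ∀ x, |f x| ≤ M) (i : Fin d) :
    Integrable (fun ε => f ε * (ε i ^ 2 - 1)) (stdGaussianPi d) :=
  (integrable_comp_eval (μ := fun _ => gaussianReal 0 1) (f := fun x => x ^ 2 - 1)
    ((memLp_id_gaussianReal 2).integrable_sq.sub (integrable_const 1))).bdd_mul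
    hf.aestronglyMeasurable (ae_of_all _ hfM)

lemma integral_smul_fderivProdGaussianScaleRatio_one {d : ℕ} {f : (Fin d → ℝ) → ℝ}
    (hf : Measurable f) {M : ℝ} (hfM : ∀ x, |f x| ≤ M) :
    ∫ ε, f ε • fderivProdGaussianScaleRatio 1 ε ∂stdGaussianPi d
      = ∑ i, (∫ ε, f ε * (ε i ^ 2 - 1) ∂stdGaussianPi d) • ContinuousLinearMap.proj i := by
  simp_rw [fderivProdGaussianScaleRatio_one, Finset.smul_sum, smul_smul]
  rw [integral_finsetSum _ fun i _ =>
    (integrable_mul_sq_sub_one_stdGaussianPi hf hfM i).smul_const _]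
  simp_rw [integral_smul_const]

theorem hasFDerivAt_integral_comp_mul_stdGaussianPi {d : ℕ} {f : (Fin d → ℝ) → ℝ}
    (hf : Measurable f) {M : ℝ} (hfM : ∀ x, |f x| ≤ M) :
    HasFDerivAt (fun r => ∫ ε, f (r * ε) ∂stdGaussianPi d)
      (∑ i, (∫ ε, f ε * (ε i ^ 2 - 1) ∂stdGaussianPi d) •
        ContinuousLinearMap.proj (R := ℝ) (φ := fun _ : Fin d => ℝ) i) 1 := by
  set U := Metric.ball (1 : Fin d → ℝ) (1 / 2)
  have hU : ∀ r ∈ U, ∀ i, r i ∈ Set.Icc (1 / 2 : ℝ) (3 / 2) := by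
    intro r hr i
    have := (dist_le_pi_dist r 1 i).trans_lt hr
    rw [Real.dist_eq, Pi.one_apply, abs_sub_lt_iff] at this
    constructor <;> linarith
  have hU_pos : ∀ r ∈ U, ∀ i, 0 < r i := fun r hr i => by linarith [(hU r hr i).1]
  have hU_nhds : U ∈ 𝓝 1 := Metric.ball_mem_nhds _ (by norm_num)
  have hM : 0 ≤ M := (abs_nonneg _).trans (hfM 0)
  have hchange : (fun r => ∫ ε, f (r * ε) ∂stdGaussianPi d)
      =ᶠ[𝓝 1] fun r => ∫ ε, f ε * ∏ i, gaussianScaleRatio (r i) (ε i) ∂stdGaussianPi d :=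
    Filter.mem_of_superset hU_nhds fun r hr => integral_comp_mul_stdGaussianPi hf (hU_pos r hr)
  have hF_int : Integrable (fun ε => f ε * ∏ i, gaussianScaleRatio ((1 : Fin d → ℝ) i) (ε i))
      (stdGaussianPi d) := by
    simp only [Pi.one_apply, gaussianScaleRatio_one, Finset.prod_const_one, mul_one]
    exact .of_bound hf.aestronglyMeasurable M (ae_of_all _ hfM)
  have hbound_int : Integrable (fun ε => M * (d * ∏ i, gaussianScaleRatioMajorant (ε i)))
      (stdGaussianPi d) :=
    ((Integrable.fintype_prod fun _ => integrable_gaussianScaleRatioMajorant).const_mul _).const_mul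
      _
  have hderiv := hasFDerivAt_integral_of_dominated_of_fderiv_le
    (F := fun r ε => f ε * ∏ i, gaussianScaleRatio (r i) (ε i))
    (F' := fun r ε => f ε • fderivProdGaussianScaleRatio r ε) hU_nhds
    (Eventually.of_forall fun r => (hf.mul (by fun_prop)).aestronglyMeasurable) hF_int
    (hf.aestronglyMeasurable.smul (continuous_fderivProdGaussianScaleRatio 1).aestronglyMeasurable)
    (ae_of_all _ fun ε r hr => by
      rw [norm_smul, Real.norm_eq_abs]
      simpa using mul_le_mul (hfM ε) (norm_fderivProdGaussianScaleRatio_le (hU r hr) ε)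
        (norm_nonneg _) hM)
    hbound_int
    (ae_of_all _ fun ε r hr =>
      (hasFDerivAt_prod_gaussianScaleRatio (fun i => (hU_pos r hr i).ne') ε).const_mul (f ε))
  rw [integral_smul_fderivProdGaussianScaleRatio_one hf hfM] at hderiv
  exact hderiv.congr_of_eventuallyEq hchange

/-- Evolution-strategies gradient estimator w.r.t. the standard deviations: if
`C : ℝ^d → ℝ` is bounded measurable, then `G(σ) = ∫ C(μ + σ ⊙ ε) dγ(ε)` is differentiable
at every `σ` in the open positive orthant, with
`∂G/∂σᵢ(σ) = (1/σᵢ) ∫ C(μ + σ ⊙ ε)(εᵢ² − 1) dγ(ε)`. -/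
theorem es_gradient_stddev
    {d : ℕ} (C : (Fin d → ℝ) → ℝ) (hCmeas : Measurable C)
    (M : ℝ) (hCbdd : ∀ x, |C x| ≤ M)
    (μ : Fin d → ℝ) :
    ∀ σ : Fin d → ℝ, (∀ i, 0 < σ i) →
      DifferentiableAt ℝ (fun s : Fin d → ℝ => ∫ ε, C (μ + s * ε) ∂(stdGaussianPi d)) σ ∧
      ∀ i : Fin d,
        fderiv ℝ (fun s : Fin d → ℝ => ∫ ε, C (μ + s * ε) ∂(stdGaussianPi d)) σ
            (Pi.single i 1) =
          (1 / σ i) * ∫ ε, C (μ + σ * ε) * ((ε i) ^ 2 - 1) ∂(stdGaussianPi d) := by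
  intro σ hσ
  let L : (Fin d → ℝ) →L[ℝ] (Fin d → ℝ) :=
    ContinuousLinearMap.pi fun i => (σ i)⁻¹ • ContinuousLinearMap.proj i
  have hL : L σ = 1 := funext fun i => inv_mul_cancel₀ (hσ i).ne'
  have hcomp : (fun s : Fin d → ℝ => ∫ ε, C (μ + s * ε) ∂stdGaussianPi d)
      = (fun r => ∫ ε, C (μ + σ * (r * ε)) ∂stdGaussianPi d) ∘ L := by
    ext s
    congr with ε
    congr 2
    ext i
    simp [L, ← mul_assoc, mul_inv_cancel₀ (hσ i).ne']
  have hK := hasFDerivAt_integral_comp_mul_stdGaussianPi (f := fun x => C (μ + σ * x))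
    (by fun_prop) fun x => hCbdd _
  rw [← hL] at hK
  have hG := hcomp ▸ hK.comp σ L.hasFDerivAt
  refine ⟨hG.differentiableAt, fun i => ?_⟩
  simp [hG.fderiv, L, Pi.single_apply]
  ring
end
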